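/- arXiv:1303.2536 — 3 statements merged into one kernel-verified Lean document; each statement's English description precedes it below -/
import Mathlib

section
/- Let n ≥ 1, m ≥ 1, let 𝔞 ∈ A_n(m) be an initial element, and let 𝔟 be the terminal element of the transversal chain T_0(𝔞). Then τ(T_0(𝔞)) = T_0(τ𝔟) as subsets of A_n(m) (note that τ𝔟 is an initial element). -/
/- Common definitions following K. O'Hara's spread/degree and the signature
   refinement; elements of A_n(m) are lists of naturals of length n+1 and sum m. -/

namespace OHara

/-- The spread of `a = (a_0, …, a_n)`: the maximum of `a_i + a_{i+1}` over `0 ≤ i ≤ n-1`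
(`0` if the list has length ≤ 1). -/
def sprL (a : List ℕ) : ℕ :=
  (Finset.range (a.length - 1)).sup (fun i => a.getD i 0 + a.getD (i + 1) 0)

/-- `M(a)`: the set of left indices of maximal pairs. -/
def Mset (a : List ℕ) : Finset ℕ :=
  (Finset.range (a.length - 1)).filter (fun i => a.getD i 0 + a.getD (i + 1) 0 = sprL a)

/-- The connected component (maximal interval of consecutive integers) of `i` inside `S`. -/
def compF (S : Finset ℕ) (i : ℕ) : Finset ℕ :=
  S.filter (fun j => Finset.Icc (min i j) (max i j) ⊆ S)

/-- The left endpoints of the maximal intervals of consecutive integers of `S`. -/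
def leftEnds (S : Finset ℕ) : Finset ℕ :=
  S.filter (fun i => i = 0 ∨ (i - 1) ∉ S)

/-- O'Hara's degree: the sum over the maximal intervals `D` of `M(a)` of `⌈|D|/2⌉`. -/
def ecdL (a : List ℕ) : ℕ :=
  ∑ i ∈ leftEnds (Mset a), ((compF (Mset a) i).card + 1) / 2

/-- The set of active indices `Act(a) = M(a) ∪ (1 + M(a))`. -/
def ActF (a : List ℕ) : Finset ℕ :=
  Mset a ∪ (Mset a).image (· + 1)

/-- An index `j` survives in `ω(a)` iff it is not active, or it is the left endpoint `c` of a
maximal interval `D = [c, c+d]` of `M(a)` with `d` odd (i.e. `|D|` even). -/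
def survivesB (a : List ℕ) (j : ℕ) : Bool :=
  decide (j ∉ ActF a ∨ (j ∈ leftEnds (Mset a) ∧ Even (compF (Mset a) j).card))

/-- `ω(a)`: the result of removing from `a` the largest possible number of maximal pairs. -/
def omegaL (a : List ℕ) : List ℕ :=
  ((List.range a.length).filter (fun j => survivesB a j)).map (fun j => a.getD j 0)

/-- Fuel-driven recursion computing the signature (the fuel `a.length` in `sigmaL`
always suffices, since `ω` shortens a list of length ≥ 3 by at least 2). -/
def sigmaAux : ℕ → List ℕ → List ℕ
  | _, [] => []
  | 0, a => [a.sum]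
  | fuel + 1, a =>
    if a.length ≤ 2 then [a.sum]
    else List.replicate (ecdL a - 1) 0 ++ [sprL a - sprL (omegaL a)] ++ sigmaAux fuel (omegaL a)

/-- The signature `σ(a)`. -/
def sigmaL (a : List ℕ) : List ℕ := sigmaAux a.length a

/-- `m = Σ_{j=0}^k (j+1)·d_j` determined by a signature `(d_0, …, d_k)`. -/
def mOf (ds : List ℕ) : ℕ := ∑ j ∈ Finset.range ds.length, (j + 1) * ds.getD j 0

/-- `Q_n(d_0, …, d_k)`: the set of elements of `A_n(m)` of signature `(d_0, …, d_k)`. -/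
def Qset (n : ℕ) (ds : List ℕ) : Set (List ℕ) :=
  {a | a.length = n + 1 ∧ a.sum = mOf ds ∧ sigmaL a = ds}

/-- The rank `rk(a) = Σ i·a_i`. -/
def rkL (a : List ℕ) : ℕ := ∑ i ∈ Finset.range a.length, i * a.getD i 0

/-- `b` covers `a` in `A_n(m)`: `b` is obtained from `a` by replacing some consecutive pair
`(a_i, a_{i+1})` by `(a_i - 1, a_{i+1} + 1)`. -/
def coversL (b a : List ℕ) : Prop :=
  ∃ i, i + 1 < a.length ∧ 0 < a.getD i 0 ∧
    b = (a.set i (a.getD i 0 - 1)).set (i + 1) (a.getD (i + 1) 0 + 1)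

/-- Normalization phase of the raising algorithm: starting at index `i ∈ M(a)`, repeatedly
replace `i` by `i - 1` as long as `i ≥ 1` and `a_{i+1} = a_{i-1}`. -/
def rnormIdx (a : List ℕ) : ℕ → ℕ
  | 0 => 0
  | i + 1 => if a.getD (i + 2) 0 = a.getD i 0 then rnormIdx a i else i + 1

/-- One move of the raising algorithm from `(a, i)` with `i ∈ M(a)`: after normalizing the
index, either halt (`none`, at an initial element) or perform one step. -/
def raiseMove (a : List ℕ) (i : ℕ) : Option (List ℕ × ℕ) :=
  let j := rnormIdx a i
  if a.getD (j + 1) 0 = 0 then none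
  else some ((a.set j (a.getD j 0 + 1)).set (j + 1) (a.getD (j + 1) 0 - 1), j)

/-- The list of elements produced by iterating the raising algorithm (including the start). -/
def raiseList : ℕ → List ℕ → ℕ → List (List ℕ)
  | 0, a, _ => [a]
  | fuel + 1, a, i =>
    match raiseMove a i with
    | none => [a]
    | some (a', j) => a :: raiseList fuel a' j

/-- Normalization phase of the lowering algorithm: starting at index `i ∈ M(a)`, repeatedly
replace `i` by `i + 1` as long as `i ≤ n - 2` and `a_i = a_{i+2}` (fuel-driven). -/
def lnormIdx (a : List ℕ) : ℕ → ℕ → ℕ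
  | 0, i => i
  | fuel + 1, i =>
    if i + 2 < a.length ∧ a.getD i 0 = a.getD (i + 2) 0 then lnormIdx a fuel (i + 1) else i

/-- One move of the lowering algorithm from `(a, i)` with `i ∈ M(a)`: after normalizing the
index, either halt (`none`, at a terminal element) or perform one step. -/
def lowerMove (a : List ℕ) (i : ℕ) : Option (List ℕ × ℕ) :=
  let j := lnormIdx a a.length i
  if a.getD j 0 = 0 then none
  else some ((a.set j (a.getD j 0 - 1)).set (j + 1) (a.getD (j + 1) 0 + 1), j)

/-- The list of elements produced by iterating the lowering algorithm (including the start). -/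
def lowerList : ℕ → List ℕ → ℕ → List (List ℕ)
  | 0, a, _ => [a]
  | fuel + 1, a, i =>
    match lowerMove a i with
    | none => [a]
    | some (a', j) => a :: lowerList fuel a' j

/-- The colors of the successive covering relations produced by the lowering algorithm:
a lowering step at index `j` replaces `(a_j, a_{j+1})` by `(a_j - 1, a_{j+1} + 1)` and has
color `j + 1`. -/
def lowerColors : ℕ → List ℕ → ℕ → List ℕ
  | 0, _, _ => []
  | fuel + 1, a, i =>
    match lowerMove a i with
    | none => []
    | some (a', j) => (j + 1) :: lowerColors fuel a' j

/-- The transversal chain `T_i(a)`: the elements obtained from `a` by the raising algorithm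
together with those obtained by the lowering algorithm, both started at index `i ∈ M(a)`.
(The fuels `rk(a)` and `a.length * a.sum` are always sufficient, since each raising move
decreases the rank by 1 and each lowering move increases it by 1, within `[0, n·m]`.) -/
def Tset (a : List ℕ) (i : ℕ) : Set (List ℕ) :=
  {x | x ∈ raiseList (rkL a) a i ∨ x ∈ lowerList (a.length * a.sum) a i}

end OHara

/-! The lowering algorithm started at index `0` of an initial element `𝔞` passes through states
`(c, i)`. If a lowering step at position `j` leads from `c` to `c'`, then the raising algorithm
on `c'`, started at the normalization of `j`, makes exactly the inverse step at `j`. Since the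
lowering algorithm on `τc` is `τ` composed with the raising algorithm on `c`, the lowering
algorithm on `τ𝔟` started at `0` retraces the chain of `𝔞` backwards, and it halts at `τ𝔞`
because `𝔞_1 = 0`. Raising from an initial element does nothing, so both transversal chains
are just these lowering chains. -/

open Finset

namespace OHara

section Orbit

variable {σ : Type*}

def orbitList (g : σ → Option σ) : ℕ → σ → List σ
  | 0, x => [x]
  | F + 1, x =>
    match g x with
    | none => [x]
    | some y => x :: orbitList g F y

variable {g : σ → Option σ} {P : σ → Prop} {F : ℕ} {x y z : σ}

lemma orbitList_succ_of_eq_none (h : g x = none) : orbitList g (F + 1) x = [x] := by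
  simp [orbitList, h]

lemma orbitList_succ_of_eq_some (h : g x = some y) :
    orbitList g (F + 1) x = x :: orbitList g F y := by
  simp [orbitList, h]

lemma orbitList_of_eq_none (h : g x = none) : orbitList g F x = [x] := by
  cases F with
  | zero => rfl
  | succ F => exact orbitList_succ_of_eq_none h

lemma exists_orbitList_eq_cons (g : σ → Option σ) (F : ℕ) (x : σ) :
    ∃ t, orbitList g F x = x :: t := by
  cases F with
  | zero => exact ⟨[], rfl⟩
  | succ F =>
    cases h : g x with
    | none => exact ⟨[], orbitList_succ_of_eq_none h⟩
    | some y => exact ⟨_, orbitList_succ_of_eq_some h⟩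

lemma length_orbitList_le : (orbitList g F x).length ≤ F + 1 := by
  induction F generalizing x with
  | zero => simp [orbitList]
  | succ F ih =>
    cases h : g x with
    | none => simp [orbitList_succ_of_eq_none h]
    | some y => simpa [orbitList_succ_of_eq_some h] using ih

lemma eq_none_of_getLast?_orbitList (hz : (orbitList g F x).getLast? = some z)
    (hF : (orbitList g F x).length ≤ F) : g z = none := by
  induction F generalizing x with
  | zero => simp [orbitList] at hF
  | succ F ih =>
    cases h : g x with
    | none => simp_all [orbitList_succ_of_eq_none h]
    | some y =>
      rw [orbitList_succ_of_eq_some h] at hz hF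
      obtain ⟨t, ht⟩ := exists_orbitList_eq_cons g F y
      rw [ht] at hz hF
      exact ih (by rw [ht]; simpa using hz) (by rw [ht]; simpa using hF)

lemma forall_mem_orbitList (hP : ∀ x y, P x → g x = some y → P y) (hx : P x) :
    ∀ y ∈ orbitList g F x, P y := by
  induction F generalizing x with
  | zero => simpa [orbitList]
  | succ F ih =>
    cases h : g x with
    | none => simpa [orbitList_succ_of_eq_none h]
    | some y =>
      simpa [orbitList_succ_of_eq_some h, hx] using ih (hP x y hx h)

lemma isChain_orbitList (hP : ∀ x y, P x → g x = some y → P y) (hx : P x) :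
    (orbitList g F x).IsChain (fun u v => P u ∧ g u = some v) := by
  induction F generalizing x with
  | zero => simp [orbitList]
  | succ F ih =>
    cases h : g x with
    | none => simp [orbitList_succ_of_eq_none h]
    | some y =>
      obtain ⟨t, ht⟩ := exists_orbitList_eq_cons g F y
      have := ih (hP x y hx h)
      rw [ht] at this
      rw [orbitList_succ_of_eq_some h, ht, List.isChain_cons_cons]
      exact ⟨⟨hx, h⟩, this⟩

lemma length_orbitList_le_of_lt {φ : σ → ℕ} {B : ℕ} (hP : ∀ x y, P x → g x = some y → P y)
    (hφ : ∀ x y, P x → g x = some y → φ x < φ y) (hB : ∀ x, P x → φ x ≤ B) (hx : P x) :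
    (orbitList g F x).length ≤ B - φ x + 1 := by
  induction F generalizing x with
  | zero => simp [orbitList]
  | succ F ih =>
    cases h : g x with
    | none => simp [orbitList_succ_of_eq_none h]
    | some y =>
      have := ih (hP x y hx h)
      have := hφ x y hx h
      have := hB y (hP x y hx h)
      simp only [orbitList_succ_of_eq_some h, List.length_cons]
      omega

lemma orbitList_eq_of_isChain {l : List σ} (hl : l.IsChain (fun u v => g u = some v))
    (hx : l.head? = some x) (hz : l.getLast? = some z) (hgz : g z = none)
    (hF : l.length ≤ F + 1) : orbitList g F x = l := by
  induction l generalizing x F with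
  | nil => simp at hx
  | cons a t ih =>
    obtain rfl : a = x := by simpa using hx
    cases t with
    | nil =>
      obtain rfl : a = z := by simpa using hz
      exact orbitList_of_eq_none hgz
    | cons b t =>
      rw [List.isChain_cons_cons] at hl
      obtain ⟨F, rfl⟩ : ∃ F', F = F' + 1 :=
        ⟨F - 1, by rw [List.length_cons, List.length_cons] at hF; omega⟩
      rw [orbitList_succ_of_eq_some hl.1, ih hl.2 rfl (by simpa using hz) (by simpa using hF)]

theorem orbitList_eq_reverse_map {ρ : σ → σ} {F' : ℕ}
    (hP : ∀ x y, P x → g x = some y → P y)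
    (hρ : ∀ x y, P x → g x = some y → g (ρ y) = some (ρ x)) (hx : P x) (hρx : g (ρ x) = none)
    (hz : (orbitList g F x).getLast? = some z) (hF : F ≤ F') :
    orbitList g F' (ρ z) = ((orbitList g F x).map ρ).reverse := by
  obtain ⟨t, ht⟩ := exists_orbitList_eq_cons g F x
  refine orbitList_eq_of_isChain (z := ρ x) ?_ (by simp [hz]) (by simp [ht]) hρx ?_
  · rw [List.isChain_reverse, List.isChain_map]
    exact (isChain_orbitList hP hx).imp fun u v huv => hρ u v huv.1 huv.2
  · have := length_orbitList_le (g := g) (F := F) (x := x)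
    simp only [List.length_reverse, List.length_map]
    omega

end Orbit

lemma getD_reverse {c : List ℕ} {q : ℕ} (h : q < c.length) :
    c.reverse.getD q 0 = c.getD (c.length - 1 - q) 0 := by
  simp [List.getD_eq_getElem?_getD, List.getElem?_reverse h]

lemma eq_of_getD_eq {c d : List ℕ} (hlen : c.length = d.length)
    (h : ∀ q < c.length, c.getD q 0 = d.getD q 0) : c = d := by
  refine List.ext_getElem hlen fun q hc hd => ?_
  have := h q hc
  rwa [List.getD_eq_getElem _ _ hc, List.getD_eq_getElem _ _ hd] at this

lemma sum_eq_sum_range_getD (c : List ℕ) : c.sum = ∑ q ∈ range c.length, c.getD q 0 := by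
  rw [sum_range, ← Fin.sum_univ_getElem]
  exact sum_congr rfl fun q _ => (List.getD_eq_getElem _ _ q.2).symm

lemma rkL_le (c : List ℕ) : rkL c ≤ (c.length - 1) * c.sum := by
  rw [rkL, sum_eq_sum_range_getD, mul_sum]
  exact sum_le_sum fun q hq => Nat.mul_le_mul_right _ (by have := mem_range.1 hq; omega)

def lowerStep (c : List ℕ) (j : ℕ) : List ℕ :=
  (c.set j (c.getD j 0 - 1)).set (j + 1) (c.getD (j + 1) 0 + 1)

def raiseStep (c : List ℕ) (j : ℕ) : List ℕ :=
  (c.set j (c.getD j 0 + 1)).set (j + 1) (c.getD (j + 1) 0 - 1)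

@[simp] lemma length_lowerStep (c : List ℕ) (j : ℕ) : (lowerStep c j).length = c.length := by
  simp [lowerStep]

@[simp] lemma length_raiseStep (c : List ℕ) (j : ℕ) : (raiseStep c j).length = c.length := by
  simp [raiseStep]

lemma getD_lowerStep {c : List ℕ} {j : ℕ} (h : j + 1 < c.length) (q : ℕ) :
    (lowerStep c j).getD q 0 = if q = j then c.getD j 0 - 1
      else if q = j + 1 then c.getD (j + 1) 0 + 1 else c.getD q 0 := by
  unfold lowerStep
  grind

lemma getD_raiseStep {c : List ℕ} {j : ℕ} (h : j + 1 < c.length) (q : ℕ) :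
    (raiseStep c j).getD q 0 = if q = j then c.getD j 0 + 1
      else if q = j + 1 then c.getD (j + 1) 0 - 1 else c.getD q 0 := by
  unfold raiseStep
  grind

lemma sum_mul_getD_lowerStep {c : List ℕ} {j : ℕ} (h : j + 1 < c.length) (hj : c.getD j 0 ≠ 0)
    (w : ℕ → ℕ) :
    ∑ q ∈ range c.length, w q * (lowerStep c j).getD q 0 + w j
      = ∑ q ∈ range c.length, w q * c.getD q 0 + w (j + 1) := by
  have hsub : {j, j + 1} ⊆ range c.length := by
    intro q; simp only [mem_insert, mem_singleton, mem_range]; omega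
  rw [← sum_sdiff hsub, ← sum_sdiff (f := fun q => w q * c.getD q 0) hsub,
    sum_pair (by omega), sum_pair (by omega)]
  have hrest : ∑ q ∈ range c.length \ {j, j + 1}, w q * (lowerStep c j).getD q 0
      = ∑ q ∈ range c.length \ {j, j + 1}, w q * c.getD q 0 := by
    refine sum_congr rfl fun q hq => ?_
    simp only [mem_sdiff, mem_insert, mem_singleton, not_or] at hq
    rw [getD_lowerStep h, if_neg hq.2.1, if_neg hq.2.2]
  obtain ⟨d, hd⟩ : ∃ d, c.getD j 0 = d + 1 := Nat.exists_eq_succ_of_ne_zero hj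
  rw [hrest, getD_lowerStep h, getD_lowerStep h, if_pos rfl, if_neg (by omega), if_pos rfl, hd,
    Nat.add_sub_cancel]
  ring

lemma sum_lowerStep {c : List ℕ} {j : ℕ} (h : j + 1 < c.length) (hj : c.getD j 0 ≠ 0) :
    (lowerStep c j).sum = c.sum := by
  have := sum_mul_getD_lowerStep h hj fun _ => 1
  simp only [one_mul] at this
  rw [sum_eq_sum_range_getD, sum_eq_sum_range_getD, length_lowerStep]
  omega

lemma rkL_lowerStep {c : List ℕ} {j : ℕ} (h : j + 1 < c.length) (hj : c.getD j 0 ≠ 0) :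
    rkL (lowerStep c j) = rkL c + 1 := by
  have := sum_mul_getD_lowerStep h hj id
  rw [rkL, rkL, length_lowerStep]
  simp only [id] at this
  omega

lemma add_getD_le_sprL {c : List ℕ} {q : ℕ} (h : q + 1 < c.length) :
    c.getD q 0 + c.getD (q + 1) 0 ≤ sprL c :=
  le_sup (f := fun i => c.getD i 0 + c.getD (i + 1) 0) (mem_range.2 (by omega))

lemma sprL_le {c : List ℕ} {s : ℕ}
    (h : ∀ q, q + 1 < c.length → c.getD q 0 + c.getD (q + 1) 0 ≤ s) : sprL c ≤ s :=
  Finset.sup_le fun q hq => h q (by have := mem_range.1 hq; omega)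

lemma sprL_reverse_le (c : List ℕ) : sprL c.reverse ≤ sprL c := by
  refine sprL_le fun q hq => ?_
  rw [List.length_reverse] at hq
  rw [getD_reverse (by omega), getD_reverse (by omega), add_comm]
  simpa [show c.length - 1 - q = c.length - 1 - (q + 1) + 1 by omega]
    using add_getD_le_sprL (c := c) (q := c.length - 1 - (q + 1)) (by omega)

lemma sprL_reverse (c : List ℕ) : sprL c.reverse = sprL c :=
  (sprL_reverse_le c).antisymm (by simpa using sprL_reverse_le c.reverse)

lemma raiseStep_lowerStep {c : List ℕ} {j : ℕ} (h : j + 1 < c.length) (hj : c.getD j 0 ≠ 0) :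
    raiseStep (lowerStep c j) j = c := by
  refine eq_of_getD_eq (by simp) fun q hq => ?_
  rw [getD_raiseStep (by simpa using h), getD_lowerStep h, getD_lowerStep h, getD_lowerStep h]
  split_ifs <;> (try subst_vars) <;> omega

lemma lowerMove_eq (c : List ℕ) (i : ℕ) : lowerMove c i =
    if c.getD (lnormIdx c c.length i) 0 = 0 then none
    else some (lowerStep c (lnormIdx c c.length i), lnormIdx c c.length i) := rfl

lemma raiseMove_eq (c : List ℕ) (r : ℕ) : raiseMove c r =
    if c.getD (rnormIdx c r + 1) 0 = 0 then none
    else some (raiseStep c (rnormIdx c r), rnormIdx c r) := rfl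

lemma lnormIdx_spec (c : List ℕ) {fuel i : ℕ} (h : c.length ≤ i + fuel) :
    i ≤ lnormIdx c fuel i ∧
    (∀ q, i ≤ q → q < lnormIdx c fuel i → q + 2 < c.length ∧ c.getD q 0 = c.getD (q + 2) 0) ∧
    ¬(lnormIdx c fuel i + 2 < c.length ∧
      c.getD (lnormIdx c fuel i) 0 = c.getD (lnormIdx c fuel i + 2) 0) := by
  induction fuel generalizing i with
  | zero =>
    simp only [lnormIdx]
    exact ⟨le_rfl, fun q h1 h2 => by omega, by omega⟩
  | succ fuel ih =>
    simp only [lnormIdx]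
    split_ifs with hc
    · obtain ⟨h1, h2, h3⟩ := ih (i := i + 1) (by omega)
      refine ⟨by omega, fun q hq1 hq2 => ?_, h3⟩
      rcases hq1.eq_or_lt with rfl | hlt
      · exact hc
      · exact h2 q hlt hq2
    · exact ⟨le_rfl, fun q h1 h2 => by omega, hc⟩

lemma lnormIdx_add_one_lt {c : List ℕ} {fuel i : ℕ} (hi : i + 1 < c.length)
    (h : c.length ≤ i + fuel) : lnormIdx c fuel i + 1 < c.length := by
  obtain ⟨hij, heq, -⟩ := lnormIdx_spec c h
  rcases hij.eq_or_lt with h' | h'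
  · omega
  · have := (heq (lnormIdx c fuel i - 1) (by omega) (by omega)).1
    omega

lemma rnormIdx_le (c : List ℕ) (r : ℕ) : rnormIdx c r ≤ r := by
  induction r with
  | zero => simp [rnormIdx]
  | succ r ih => simp only [rnormIdx]; split_ifs <;> omega

lemma rnormIdx_eq {c : List ℕ} {j r : ℕ} (hjr : j ≤ r)
    (heq : ∀ q, j ≤ q → q < r → c.getD (q + 2) 0 = c.getD q 0)
    (hstop : j = 0 ∨ c.getD (j + 1) 0 ≠ c.getD (j - 1) 0) : rnormIdx c r = j := by
  induction r with
  | zero => simp only [rnormIdx]; omega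
  | succ r ih =>
    simp only [rnormIdx]
    rcases hjr.eq_or_lt with rfl | hlt
    · rw [if_neg (by simpa using hstop)]
    · rw [if_pos (heq r (by omega) (by omega))]
      exact ih (by omega) fun q h1 h2 => heq q h1 (by omega)

lemma lnormIdx_reverse {c : List ℕ} {r fuel : ℕ} (h : r + 1 < c.length) (hfuel : r ≤ fuel) :
    lnormIdx c.reverse fuel (c.length - 2 - r) = c.length - 2 - rnormIdx c r := by
  induction r generalizing fuel with
  | zero =>
    cases fuel
    · rfl
    · simp only [lnormIdx, rnormIdx, List.length_reverse]
      split_ifs <;> omega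
  | succ r ih =>
    obtain ⟨fuel, rfl⟩ : ∃ f, fuel = f + 1 := ⟨fuel - 1, by omega⟩
    have e1 : c.reverse.getD (c.length - 2 - (r + 1)) 0 = c.getD (r + 2) 0 := by
      rw [getD_reverse (by omega)]; congr 1; omega
    have e2 : c.reverse.getD (c.length - 2 - (r + 1) + 2) 0 = c.getD r 0 := by
      rw [getD_reverse (by omega)]; congr 1; omega
    simp only [lnormIdx, rnormIdx, List.length_reverse, e1, e2]
    split_ifs with h1 h2 h2
    · rw [show c.length - 2 - (r + 1) + 1 = c.length - 2 - r by omega]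
      exact ih (by omega) (by omega)
    · omega
    · omega
    · rfl

lemma lowerMove_reverse {c : List ℕ} {r : ℕ} (h : r + 1 < c.length) :
    lowerMove c.reverse (c.length - 2 - r) =
      (raiseMove c r).map fun y => (y.1.reverse, c.length - 2 - y.2) := by
  have hj := rnormIdx_le c r
  rw [lowerMove_eq, raiseMove_eq, List.length_reverse, lnormIdx_reverse h (by omega),
    getD_reverse (by omega),
    show c.length - 1 - (c.length - 2 - rnormIdx c r) = rnormIdx c r + 1 by omega]
  split_ifs with h0
  · rfl
  · simp only [Option.map_some, Option.some.injEq, Prod.mk.injEq, and_true]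
    refine eq_of_getD_eq (by simp) fun q hq => ?_
    simp only [length_lowerStep, List.length_reverse] at hq
    set j := rnormIdx c r
    rw [getD_reverse (c := raiseStep c j) (by simpa using hq), getD_raiseStep (by omega),
      length_raiseStep, getD_lowerStep (by rw [List.length_reverse]; omega),
      getD_reverse (q := c.length - 2 - j) (by omega),
      getD_reverse (q := c.length - 2 - j + 1) (by omega), getD_reverse (q := q) hq]
    split_ifs <;> first | omega | (congr 2; omega)

lemma lowerMove_eq_some_iff {c : List ℕ} {i : ℕ} {y : List ℕ × ℕ} :
    lowerMove c i = some y ↔ c.getD (lnormIdx c c.length i) 0 ≠ 0 ∧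
      y = (lowerStep c (lnormIdx c c.length i), lnormIdx c c.length i) := by
  rw [lowerMove_eq]
  split_ifs with h
  · simp only [false_iff, not_and]
    exact fun h' => absurd h h'
  · simp only [Option.some.injEq, h, ne_eq, not_false_eq_true, true_and, eq_comm]

/-- `i ∈ M(c)` and, if `i ≥ 1`, `c_{i-1} ≤ c_{i+1}`. The lowering algorithm preserves this, and
it is what makes each lowering step undone by the raising algorithm. -/
structure LowerAdmissible (c : List ℕ) (i : ℕ) : Prop where
  lt_length : i + 1 < c.length
  add_eq_sprL : c.getD i 0 + c.getD (i + 1) 0 = sprL c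
  left_le : i = 0 ∨ c.getD (i - 1) 0 ≤ c.getD (i + 1) 0

namespace LowerAdmissible

variable {c : List ℕ} {i j : ℕ}

lemma zero (hc : 1 < c.length) (h1 : c.getD 1 0 = 0) (h0 : c.getD 0 0 = sprL c) :
    LowerAdmissible c 0 :=
  ⟨hc, by rw [zero_add, h0, h1, add_zero], Or.inl rfl⟩

protected lemma lnormIdx (h : LowerAdmissible c i) :
    LowerAdmissible c (lnormIdx c c.length i) := by
  obtain ⟨hij, heq, -⟩ := lnormIdx_spec c (i := i) (fuel := c.length) (by omega)
  set j := lnormIdx c c.length i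
  have hpair : ∀ k, i ≤ k → k ≤ j → c.getD k 0 + c.getD (k + 1) 0 = sprL c := by
    intro k hik hkj
    induction k, hik using Nat.le_induction with
    | base => exact h.add_eq_sprL
    | succ k hik ih =>
      have := (heq k hik (by omega)).2
      have := ih (by omega)
      rw [show k + 1 + 1 = k + 2 by rfl]
      omega
  refine ⟨lnormIdx_add_one_lt h.lt_length (by omega), hpair j hij le_rfl, ?_⟩
  rcases hij.eq_or_lt with h' | h'
  · rw [← h']; exact h.left_le
  · have := (heq (j - 1) (by omega) (by omega)).2
    rw [show j - 1 + 2 = j + 1 by omega] at this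
    omega

lemma getD_add_two_lt (h : LowerAdmissible c j)
    (hstop : ¬(j + 2 < c.length ∧ c.getD j 0 = c.getD (j + 2) 0)) (h2 : j + 2 < c.length) :
    c.getD (j + 2) 0 < c.getD j 0 := by
  have hle := add_getD_le_sprL (c := c) (q := j + 1) (by omega)
  have := h.add_eq_sprL
  rw [show j + 1 + 1 = j + 2 by rfl] at hle
  omega

lemma sprL_lowerStep (h : LowerAdmissible c j)
    (hstop : ¬(j + 2 < c.length ∧ c.getD j 0 = c.getD (j + 2) 0)) (hj : c.getD j 0 ≠ 0) :
    sprL (lowerStep c j) = sprL c := by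
  have hj1 := h.lt_length
  have hpair := h.add_eq_sprL
  refine le_antisymm (sprL_le fun q hq => ?_) ?_
  · rw [length_lowerStep] at hq
    have hq_le := add_getD_le_sprL hq
    rw [getD_lowerStep hj1, getD_lowerStep hj1]
    rcases eq_or_ne q (j + 1) with rfl | hq1
    · have h2 := h.getD_add_two_lt hstop (by omega)
      rw [show j + 2 = j + 1 + 1 by rfl] at h2
      split_ifs <;> omega
    · split_ifs <;> (try subst_vars) <;> omega
  · have hle := add_getD_le_sprL (c := lowerStep c j) (q := j) (by simpa using hj1)
    rw [getD_lowerStep hj1, getD_lowerStep hj1, if_pos rfl, if_neg (by omega), if_pos rfl] at hle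
    omega

protected lemma lowerStep (h : LowerAdmissible c j)
    (hstop : ¬(j + 2 < c.length ∧ c.getD j 0 = c.getD (j + 2) 0)) (hj : c.getD j 0 ≠ 0) :
    LowerAdmissible (lowerStep c j) j := by
  have hj1 := h.lt_length
  refine ⟨by simpa using hj1, ?_, ?_⟩
  · rw [h.sprL_lowerStep hstop hj, getD_lowerStep hj1, getD_lowerStep hj1, if_pos rfl,
      if_neg (by omega), if_pos rfl, ← h.add_eq_sprL]
    omega
  · rcases Nat.eq_zero_or_pos j with h0 | hpos
    · exact Or.inl h0
    · have hle := h.left_le.resolve_left (by omega)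
      right
      rw [getD_lowerStep hj1, getD_lowerStep hj1, if_neg (by omega), if_neg (by omega),
        if_neg (by omega), if_pos rfl]
      omega

lemma raiseMove_lowerStep (h : LowerAdmissible c j) (hj : c.getD j 0 ≠ 0) :
    raiseMove (lowerStep c j) (lnormIdx (lowerStep c j) c.length j) = some (c, j) := by
  have hj1 := h.lt_length
  obtain ⟨hjr, heq, -⟩ :=
    lnormIdx_spec (lowerStep c j) (i := j) (fuel := c.length) (by simp)
  have hc'1 : (lowerStep c j).getD (j + 1) 0 = c.getD (j + 1) 0 + 1 := by
    rw [getD_lowerStep hj1, if_neg (by omega), if_pos rfl]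
  have hr : rnormIdx (lowerStep c j) (lnormIdx (lowerStep c j) c.length j) = j := by
    refine rnormIdx_eq hjr (fun q h1 h2 => (heq q h1 h2).2.symm) ?_
    rcases Nat.eq_zero_or_pos j with h0 | hpos
    · exact Or.inl h0
    · have hle := h.left_le.resolve_left (by omega)
      right
      rw [hc'1, getD_lowerStep hj1, if_neg (by omega), if_neg (by omega)]
      omega
  rw [raiseMove_eq, hr, hc'1, if_neg (by omega), raiseStep_lowerStep hj1 hj]

lemma lowerMove_eq_none (h : LowerAdmissible c i) (hm : lowerMove c i = none) :
    lnormIdx c c.length i + 2 = c.length ∧ c.getD (c.length - 2) 0 = 0 ∧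
      c.getD (c.length - 1) 0 = sprL c := by
  obtain ⟨-, -, hstop⟩ := lnormIdx_spec c (i := i) (fuel := c.length) (by omega)
  have hadm := h.lnormIdx
  set j := lnormIdx c c.length i
  have hj : c.getD j 0 = 0 := by
    rw [lowerMove_eq] at hm
    split_ifs at hm with h0
    exact h0
  have hlast : j + 2 = c.length := by
    by_contra hne
    have := hadm.getD_add_two_lt hstop (by have := hadm.lt_length; omega)
    omega
  have hpair := hadm.add_eq_sprL
  rw [← hlast, Nat.add_sub_cancel, show j + 2 - 1 = j + 1 by omega]
  exact ⟨rfl, hj, by omega⟩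

lemma lowerMove_eq_some {y : List ℕ × ℕ} (h : LowerAdmissible c i) (hm : lowerMove c i = some y) :
    LowerAdmissible y.1 y.2 ∧ y.1.length = c.length ∧ y.1.sum = c.sum ∧ rkL c < rkL y.1 := by
  obtain ⟨hj, rfl⟩ := lowerMove_eq_some_iff.1 hm
  obtain ⟨-, -, hstop⟩ := lnormIdx_spec c (i := i) (fuel := c.length) (by omega)
  have hadm := h.lnormIdx
  exact ⟨hadm.lowerStep hstop hj, length_lowerStep _ _, sum_lowerStep hadm.lt_length hj,
    by rw [rkL_lowerStep hadm.lt_length hj]; omega⟩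

end LowerAdmissible

/-- The state from which the lowering algorithm on `τc` retraces backwards the lowering step
leading to the state `(c, i)`. -/
def mirror (x : List ℕ × ℕ) : List ℕ × ℕ :=
  (x.1.reverse, x.1.length - 2 - lnormIdx x.1 x.1.length x.2)

lemma LowerAdmissible.lowerMove_mirror {c : List ℕ} {i : ℕ} {y : List ℕ × ℕ}
    (h : LowerAdmissible c i) (hm : lowerMove c i = some y) :
    Function.uncurry lowerMove (mirror y) = some (mirror (c, i)) := by
  obtain ⟨hj, rfl⟩ := lowerMove_eq_some_iff.1 hm
  have hadm := h.lnormIdx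
  set j := lnormIdx c c.length i
  have hrev := lowerMove_reverse (c := lowerStep c j) (r := lnormIdx (lowerStep c j) c.length j)
    (lnormIdx_add_one_lt (by simpa using hadm.lt_length) (by simp))
  simp only [length_lowerStep] at hrev
  simp only [mirror, Function.uncurry_apply_pair, length_lowerStep, hrev,
    hadm.raiseMove_lowerStep hj]
  rfl

lemma lowerMove_mirror_zero {c : List ℕ} (hc : 1 < c.length) (h1 : c.getD 1 0 = 0) :
    Function.uncurry lowerMove (mirror (c, 0)) = none := by
  obtain ⟨-, heq, -⟩ := lnormIdx_spec c (i := 0) (fuel := c.length) (by omega)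
  have hr : rnormIdx c (lnormIdx c c.length 0) = 0 :=
    rnormIdx_eq (Nat.zero_le _) (fun q _ h2 => (heq q (Nat.zero_le _) h2).2.symm) (Or.inl rfl)
  simp only [mirror, Function.uncurry_apply_pair]
  rw [lowerMove_reverse (lnormIdx_add_one_lt hc (by omega)), raiseMove_eq, hr, if_pos h1]
  rfl

lemma lowerList_eq_map_orbitList (F : ℕ) (c : List ℕ) (i : ℕ) :
    lowerList F c i = (orbitList (Function.uncurry lowerMove) F (c, i)).map Prod.fst := by
  induction F generalizing c i with
  | zero => rfl
  | succ F ih =>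
    cases h : lowerMove c i with
    | none =>
      simp [lowerList, h,
        orbitList_succ_of_eq_none (g := Function.uncurry lowerMove) (x := (c, i)) h]
    | some y =>
      simp [lowerList, h, ih,
        orbitList_succ_of_eq_some (g := Function.uncurry lowerMove) (x := (c, i)) h]

lemma raiseList_zero_of_getD_one_eq_zero {c : List ℕ} (h1 : c.getD 1 0 = 0) (F : ℕ) :
    raiseList F c 0 = [c] := by
  cases F with
  | zero => rfl
  | succ F => simp only [raiseList, raiseMove_eq, rnormIdx, zero_add, h1, if_true]

lemma Tset_zero_of_getD_one_eq_zero {c : List ℕ} (h1 : c.getD 1 0 = 0) :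
    Tset c 0 = {x | x ∈ lowerList (c.length * c.sum) c 0} := by
  obtain ⟨t, ht⟩ := exists_orbitList_eq_cons (Function.uncurry lowerMove) (c.length * c.sum) (c, 0)
  ext x
  simp [Tset, raiseList_zero_of_getD_one_eq_zero h1, lowerList_eq_map_orbitList, ht]

theorem lowerList_reverse_of_initial {a b : List ℕ} (ha : 1 < a.length) (hs : 0 < a.sum)
    (h1 : a.getD 1 0 = 0) (h0 : a.getD 0 0 = sprL a)
    (hb : (lowerList (a.length * a.sum) a 0).getLast? = some b) :
    (b.length = a.length ∧ b.sum = a.sum ∧ b.getD (b.length - 2) 0 = 0 ∧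
      b.getD (b.length - 1) 0 = sprL b) ∧
    lowerList (a.length * a.sum) b.reverse 0 =
      ((lowerList (a.length * a.sum) a 0).map List.reverse).reverse := by
  set g := Function.uncurry lowerMove
  set F := a.length * a.sum
  let P : List ℕ × ℕ → Prop := fun x =>
    LowerAdmissible x.1 x.2 ∧ x.1.length = a.length ∧ x.1.sum = a.sum
  have hP : ∀ x y, P x → g x = some y → P y := by
    rintro x y ⟨hx, hl, hs⟩ hy
    obtain ⟨hy, hyl, hys, -⟩ := hx.lowerMove_eq_some hy
    exact ⟨hy, hyl.trans hl, hys.trans hs⟩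
  have ha0 : P (a, 0) := ⟨.zero ha h1 h0, rfl, rfl⟩
  have hlen : (orbitList g F (a, 0)).length ≤ F := by
    have hle := length_orbitList_le_of_lt (F := F) (φ := fun x => rkL x.1)
      (B := (a.length - 1) * a.sum) hP (fun x y hx hy => (hx.1.lowerMove_eq_some hy).2.2.2)
      (fun x hx => hx.2.1 ▸ hx.2.2 ▸ rkL_le x.1) ha0
    obtain ⟨k, hk⟩ : ∃ k, a.length = k + 1 := ⟨a.length - 1, by omega⟩
    simp only [F, hk, Nat.add_sub_cancel, add_mul, one_mul] at hle ⊢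
    omega
  rw [lowerList_eq_map_orbitList, List.getLast?_map, Option.map_eq_some_iff] at hb
  obtain ⟨z, hz, rfl⟩ := hb
  obtain ⟨hzadm, hzl, hzs⟩ : P z := forall_mem_orbitList hP ha0 z (List.mem_of_getLast? hz)
  obtain ⟨hj, hb1, hb0⟩ := hzadm.lowerMove_eq_none (eq_none_of_getLast?_orbitList hz hlen)
  have hmirror : mirror z = (z.1.reverse, 0) := by
    simp only [mirror, Prod.mk.injEq, true_and]
    omega
  refine ⟨⟨hzl, hzs, hb1, hb0⟩, ?_⟩
  rw [lowerList_eq_map_orbitList, lowerList_eq_map_orbitList, ← hmirror,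
    orbitList_eq_reverse_map hP (fun x y hx => hx.1.lowerMove_mirror) ha0
      (lowerMove_mirror_zero ha h1) hz le_rfl]
  simp only [List.map_reverse, List.map_map]
  rfl

end OHara

open OHara in
/-- If `𝔞` is initial and `𝔟` is the terminal element of `T_0(𝔞)`, then `τ𝔟` is initial
and `τ(T_0(𝔞)) = T_0(τ𝔟)` as subsets of `A_n(m)`. -/
theorem tau_of_transversal_chain (n m : ℕ) (hn : 1 ≤ n) (hm : 1 ≤ m)
    (a : List ℕ) (hlen : a.length = n + 1) (hsum : a.sum = m)
    (h1 : a.getD 1 0 = 0) (h0 : a.getD 0 0 = sprL a)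
    (b : List ℕ) (hb : (lowerList (a.length * a.sum) a 0).getLast? = some b) :
    (b.reverse.getD 1 0 = 0 ∧ b.reverse.getD 0 0 = sprL b.reverse) ∧
    (fun l : List ℕ => l.reverse) '' Tset a 0 = Tset b.reverse 0 := by
  obtain ⟨⟨hbl, hbs, hb1, hb0⟩, hrev⟩ :=
    lowerList_reverse_of_initial (by omega) (by omega) h1 h0 hb
  have hinit1 : b.reverse.getD 1 0 = 0 := by
    rw [getD_reverse (by omega), Nat.sub_sub, hb1]
  have hinit0 : b.reverse.getD 0 0 = sprL b.reverse := by
    rw [getD_reverse (by omega), Nat.sub_zero, hb0, sprL_reverse]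
  refine ⟨⟨hinit1, hinit0⟩, ?_⟩
  rw [Tset_zero_of_getD_one_eq_zero h1, Tset_zero_of_getD_one_eq_zero hinit1, List.length_reverse,
    List.sum_reverse, hbl, hbs, hrev]
  ext x
  simp
end

section
/- Let n ≥ 1, m ≥ 1, 𝔞 = (a_0,…,a_n) ∈ A_n(m), s = spr(𝔞), and let i = min M(𝔞) be the left index of the leftmost maximal pair of 𝔞. Then the raising algorithm started at index i halts at the initial element (s, 0, a_0, …, a_{i−1}, a_{i+2}, …, a_n), and it performs exactly a_{i+1} + i·s − 2(a_0 + ⋯ + a_{i−1}) steps (covering relations) to reach it. -/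
/-!
Throughout the run the current index `j` is the leftmost index of a pair of sum `s = spr(𝔞)`.
A step at `j` keeps the pair `(j, j+1)` at sum `s` and raises the pair `(j-1, j)` by one; when
this makes `(j-1, j)` maximal, then `a_{j+1} = a_{j-1}` after the step and the algorithm moves
on to `j - 1`. In both cases `[s, 0] ++ take j ++ drop (j+2)` is unchanged and
`a_{j+1} + j·s - 2(a_0 + ⋯ + a_{j-1})` drops by one, and at the halt (`j = 0`, `a_1 = 0`) these
are the current element and `0`.
-/

namespace OHara

def raiseAt (b : List ℕ) (j : ℕ) : List ℕ :=
  (b.set j (b.getD j 0 + 1)).set (j + 1) (b.getD (j + 1) 0 - 1)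

section raiseAt

variable {b : List ℕ} {j : ℕ}

@[simp]
theorem length_raiseAt : (raiseAt b j).length = b.length := by
  simp [raiseAt]

theorem getD_raiseAt_self (hj : j + 1 < b.length) : (raiseAt b j).getD j 0 = b.getD j 0 + 1 := by
  simp [raiseAt, List.getD_eq_getElem?_getD, show j < b.length by omega]

theorem getD_raiseAt_succ (hj : j + 1 < b.length) :
    (raiseAt b j).getD (j + 1) 0 = b.getD (j + 1) 0 - 1 := by
  simp [raiseAt, List.getD_eq_getElem?_getD, hj]

theorem getD_raiseAt_of_ne {k : ℕ} (h₁ : k ≠ j) (h₂ : k ≠ j + 1) :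
    (raiseAt b j).getD k 0 = b.getD k 0 := by
  simp [raiseAt, List.getD_eq_getElem?_getD, h₁.symm, h₂.symm]

theorem take_raiseAt {t : ℕ} (ht : t ≤ j) : (raiseAt b j).take t = b.take t := by
  rw [raiseAt, List.take_set_of_le (by omega), List.take_set_of_le ht]

theorem drop_raiseAt : (raiseAt b j).drop (j + 2) = b.drop (j + 2) := by
  simp [raiseAt, List.drop_set]

theorem rkL_set {k : ℕ} (hk : k < b.length) (v : ℕ) :
    rkL (b.set k v) + k * b.getD k 0 = rkL b + k * v := by
  have hk' : k ∈ Finset.range b.length := Finset.mem_range.mpr hk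
  have hrest : ∀ i ∈ (Finset.range b.length).erase k,
      i * (b.set k v).getD i 0 = i * b.getD i 0 := fun i hi => by
    simp [List.getD_eq_getElem?_getD, (Finset.ne_of_mem_erase hi).symm]
  rw [rkL, rkL, List.length_set, ← Finset.add_sum_erase _ _ hk', ← Finset.add_sum_erase _ _ hk',
    Finset.sum_congr rfl hrest]
  simp only [List.getD_eq_getElem?_getD, List.length_set, hk, getElem?_pos,
    List.getElem_set_self, Option.getD_some]
  ring

theorem rkL_raiseAt (hj : j + 1 < b.length) (hpos : b.getD (j + 1) 0 ≠ 0) :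
    rkL (raiseAt b j) + 1 = rkL b := by
  have h₁ := rkL_set (b := b) (k := j) (by omega) (b.getD j 0 + 1)
  have h₂ := rkL_set (b := b.set j (b.getD j 0 + 1)) (k := j + 1) (by simpa using hj)
    (b.getD (j + 1) 0 - 1)
  rw [← raiseAt, List.getD_eq_getElem?_getD, List.getElem?_set_ne (by omega),
    ← List.getD_eq_getElem?_getD] at h₂
  obtain ⟨c, hc⟩ := Nat.exists_eq_succ_of_ne_zero hpos
  rw [hc, Nat.succ_sub_one] at h₂
  linarith

end raiseAt

theorem raiseList_eq_of_rnormIdx_eq {f : ℕ} {b : List ℕ} {i i' : ℕ}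
    (h : rnormIdx b i = rnormIdx b i') : raiseList f b i = raiseList f b i' := by
  cases f with
  | zero => rfl
  | succ f => simp only [raiseList, raiseMove, h]

structure IsLeftmostPair (s : ℕ) (b : List ℕ) (j : ℕ) : Prop where
  succ_lt_length : j + 1 < b.length
  pair_eq : b.getD j 0 + b.getD (j + 1) 0 = s
  pair_lt : ∀ k < j, b.getD k 0 + b.getD (k + 1) 0 < s

theorem isLeftmostPair_sInf_Mset {a : List ℕ} (ha : 1 < a.length) :
    IsLeftmostPair (sprL a) a (sInf {j | j ∈ Mset a}) := by
  have hne : (Finset.range (a.length - 1)).Nonempty := ⟨0, Finset.mem_range.mpr (by omega)⟩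
  obtain ⟨k, hk, hks⟩ :=
    Finset.exists_mem_eq_sup _ hne (fun i => a.getD i 0 + a.getD (i + 1) 0)
  have hmem : sInf {j | j ∈ Mset a} ∈ Mset a :=
    Nat.sInf_mem ⟨k, Finset.mem_filter.mpr ⟨hk, hks.symm⟩⟩
  obtain ⟨hr, heq⟩ := Finset.mem_filter.mp hmem
  rw [Finset.mem_range] at hr
  refine ⟨by omega, heq, fun l hl => ?_⟩
  have hlr : l ∈ Finset.range (a.length - 1) := Finset.mem_range.mpr (by omega)
  have hnot : l ∉ Mset a := Nat.notMem_of_lt_sInf hl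
  simp only [Mset, Finset.mem_filter, not_and] at hnot
  exact lt_of_le_of_ne (Finset.le_sup (f := fun i => a.getD i 0 + a.getD (i + 1) 0) hlr)
    (hnot hlr)

def raiseTarget (s : ℕ) (b : List ℕ) (j : ℕ) : List ℕ :=
  [s, 0] ++ b.take j ++ b.drop (j + 2)

def raiseSteps (s : ℕ) (b : List ℕ) (j : ℕ) : ℤ :=
  b.getD (j + 1) 0 + j * s - 2 * (b.take j).sum

namespace IsLeftmostPair

variable {s : ℕ} {b : List ℕ} {j : ℕ}

theorem rnormIdx_eq (h : IsLeftmostPair s b j) : rnormIdx b j = j := by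
  cases j with
  | zero => rfl
  | succ k =>
    have hlt := h.pair_lt k (by omega)
    have heq : b.getD (k + 1) 0 + b.getD (k + 2) 0 = s := h.pair_eq
    simp only [rnormIdx]
    rw [if_neg (by omega)]

theorem raiseList_eq_singleton (h : IsLeftmostPair s b j) (hz : b.getD (j + 1) 0 = 0) (f : ℕ) :
    raiseList f b j = [b] := by
  cases f with
  | zero => rfl
  | succ f => simp only [raiseList, raiseMove, h.rnormIdx_eq, hz, ↓reduceIte]

theorem raiseList_succ (h : IsLeftmostPair s b j) (hz : b.getD (j + 1) 0 ≠ 0) (f : ℕ) :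
    raiseList (f + 1) b j = b :: raiseList f (raiseAt b j) j := by
  simp only [raiseList, raiseMove, h.rnormIdx_eq, if_neg hz, raiseAt]

theorem raiseAt_stay (h : IsLeftmostPair s b j) (hz : b.getD (j + 1) 0 ≠ 0)
    (hk : ∀ k, j = k + 1 → b.getD k 0 + 1 ≠ b.getD (j + 1) 0) :
    IsLeftmostPair s (raiseAt b j) j ∧ raiseTarget s (raiseAt b j) j = raiseTarget s b j ∧
      raiseSteps s (raiseAt b j) j + 1 = raiseSteps s b j := by
  have hj := h.succ_lt_length
  have heq := h.pair_eq
  have hself := getD_raiseAt_self hj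
  have hsucc := getD_raiseAt_succ hj
  refine ⟨⟨by simpa using hj, by omega, fun k hk' => ?_⟩, ?_, ?_⟩
  · have hlt := h.pair_lt k hk'
    rw [getD_raiseAt_of_ne (by omega) (by omega)]
    rcases Nat.lt_or_ge (k + 1) j with hkj | hkj
    · rwa [getD_raiseAt_of_ne (by omega) (by omega)]
    · obtain rfl : j = k + 1 := by omega
      have := hk k rfl
      omega
  · rw [raiseTarget, raiseTarget, take_raiseAt le_rfl, drop_raiseAt]
  · rw [raiseSteps, raiseSteps, take_raiseAt le_rfl, hsucc]
    push_cast [Nat.one_le_iff_ne_zero.mpr hz]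
    ring

theorem raiseAt_shift {k : ℕ} (h : IsLeftmostPair s b (k + 1))
    (hk : b.getD k 0 + 1 = b.getD (k + 2) 0) :
    IsLeftmostPair s (raiseAt b (k + 1)) k ∧
      rnormIdx (raiseAt b (k + 1)) (k + 1) = rnormIdx (raiseAt b (k + 1)) k ∧
      raiseTarget s (raiseAt b (k + 1)) k = raiseTarget s b (k + 1) ∧
      raiseSteps s (raiseAt b (k + 1)) k + 1 = raiseSteps s b (k + 1) := by
  have hj : k + 2 < b.length := h.succ_lt_length
  have heq : b.getD (k + 1) 0 + b.getD (k + 2) 0 = s := h.pair_eq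
  have hself := getD_raiseAt_self (b := b) hj
  have hsucc : (raiseAt b (k + 1)).getD (k + 2) 0 = b.getD (k + 2) 0 - 1 := getD_raiseAt_succ hj
  have hleft : (raiseAt b (k + 1)).getD k 0 = b.getD k 0 :=
    getD_raiseAt_of_ne (by omega) (by omega)
  have hsum : ((b.take (k + 1)).sum : ℤ) = (b.take k).sum + b.getD k 0 := by
    rw [List.sum_take_succ _ _ (by omega), List.getD_eq_getElem _ _ (by omega)]
    push_cast
    rfl
  refine ⟨⟨by rw [length_raiseAt]; omega, by omega, fun l hl => ?_⟩, ?_, ?_, ?_⟩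
  · rw [getD_raiseAt_of_ne (by omega) (by omega), getD_raiseAt_of_ne (by omega) (by omega)]
    exact h.pair_lt l (by omega)
  · simp only [rnormIdx]
    rw [if_pos (by omega)]
  · have hdrop : (raiseAt b (k + 1)).drop (k + 2) = b.getD k 0 :: b.drop (k + 3) := by
      rw [List.drop_eq_getElem_cons (by rw [length_raiseAt]; omega), ← List.getD_eq_getElem _ 0,
        hsucc, drop_raiseAt]
      congr 1
      omega
    have htake : b.take (k + 1) = b.take k ++ [b.getD k 0] := by
      rw [List.take_add_one, List.getElem?_eq_getElem (by omega),
        List.getD_eq_getElem _ _ (by omega)]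
      rfl
    rw [raiseTarget, raiseTarget, hdrop, take_raiseAt (by omega), htake]
    simp
  · rw [raiseSteps, raiseSteps, take_raiseAt (by omega), hsum, hself]
    push_cast
    have : (b.getD (k + 2) 0 : ℤ) = b.getD k 0 + 1 := by exact_mod_cast hk.symm
    have : (s : ℤ) = b.getD (k + 1) 0 + b.getD (k + 2) 0 := by exact_mod_cast heq.symm
    linarith

theorem exists_raiseAt (h : IsLeftmostPair s b j) (hz : b.getD (j + 1) 0 ≠ 0) :
    ∃ j', IsLeftmostPair s (raiseAt b j) j' ∧
      rnormIdx (raiseAt b j) j = rnormIdx (raiseAt b j) j' ∧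
      raiseTarget s (raiseAt b j) j' = raiseTarget s b j ∧
      raiseSteps s (raiseAt b j) j' + 1 = raiseSteps s b j := by
  -- the step raises the pair `(j-1, j)` by one, making it maximal iff `b_{j-1} + 1 = b_{j+1}`
  by_cases hk : ∃ k, j = k + 1 ∧ b.getD k 0 + 1 = b.getD (j + 1) 0
  · obtain ⟨k, rfl, hk⟩ := hk
    exact ⟨k, h.raiseAt_shift hk⟩
  · push Not at hk
    obtain ⟨h', htarget, hsteps⟩ := h.raiseAt_stay hz hk
    exact ⟨j, h', rfl, htarget, hsteps⟩

theorem raiseList_spec_of_getD_eq_zero {f : ℕ} (h : IsLeftmostPair s b j)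
    (hz : b.getD (j + 1) 0 = 0) :
    (raiseList f b j).getLast? = some (raiseTarget s b j) ∧
      ((raiseList f b j).length : ℤ) = raiseSteps s b j + 1 := by
  rw [h.raiseList_eq_singleton hz]
  obtain rfl : j = 0 := by
    by_contra hj
    have := h.pair_lt (j - 1) (by omega)
    rw [Nat.sub_add_cancel (by omega)] at this
    have := h.pair_eq
    omega
  obtain ⟨x, y, t, rfl⟩ : ∃ x y t, b = x :: y :: t := by
    match b, h.succ_lt_length with
    | x :: y :: t, _ => exact ⟨x, y, t, rfl⟩
  have := h.pair_eq
  simp_all [raiseTarget, raiseSteps]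

theorem raiseList_spec {f : ℕ} (h : IsLeftmostPair s b j) (hf : rkL b ≤ f) :
    (raiseList f b j).getLast? = some (raiseTarget s b j) ∧
      ((raiseList f b j).length : ℤ) = raiseSteps s b j + 1 := by
  induction f generalizing b j with
  | zero =>
    refine h.raiseList_spec_of_getD_eq_zero (by_contra fun hz => ?_)
    have := rkL_raiseAt h.succ_lt_length hz
    omega
  | succ f ih =>
    by_cases hz : b.getD (j + 1) 0 = 0
    · exact h.raiseList_spec_of_getD_eq_zero hz
    have hrk := rkL_raiseAt h.succ_lt_length hz
    obtain ⟨j', h', hnorm, htarget, hsteps⟩ := h.exists_raiseAt hz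
    obtain ⟨ihLast, ihLength⟩ := ih h' (by omega)
    rw [h.raiseList_succ hz, raiseList_eq_of_rnormIdx_eq hnorm, List.getLast?_cons, ihLast,
      List.length_cons, htarget]
    refine ⟨rfl, ?_⟩
    push_cast
    omega

end IsLeftmostPair

end OHara

open OHara in
theorem raising_from_leftmost_general (n : ℕ) (hn : 1 ≤ n)
    (a : List ℕ) (hlen : a.length = n + 1)
    (s : ℕ) (hs : s = sprL a)
    (i : ℕ) (hi : i = sInf {j : ℕ | j ∈ Mset a}) :
    (raiseList (rkL a) a i).getLast? = some ([s, 0] ++ a.take i ++ a.drop (i + 2)) ∧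
    ((raiseList (rkL a) a i).length : ℤ) =
      (a.getD (i + 1) 0 : ℤ) + (i : ℤ) * (s : ℤ) - 2 * ((a.take i).sum : ℤ) + 1 := by
  subst hs hi
  exact (isLeftmostPair_sInf_Mset (by omega)).raiseList_spec le_rfl

open OHara in
/-- Started at the leftmost maximal-pair index `i = min M(𝔞)`, the raising algorithm halts
at the initial element `(s, 0, a_0, …, a_{i-1}, a_{i+2}, …, a_n)` (`s = spr(𝔞)`), and it
performs exactly `a_{i+1} + i·s - 2(a_0 + ⋯ + a_{i-1})` steps to reach it. -/
theorem raising_from_leftmost (n m : ℕ) (hn : 1 ≤ n) (hm : 1 ≤ m)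
    (a : List ℕ) (hlen : a.length = n + 1) (hsum : a.sum = m)
    (s : ℕ) (hs : s = sprL a)
    (i : ℕ) (hi : i = sInf {j : ℕ | j ∈ Mset a}) :
    (raiseList (rkL a) a i).getLast? = some ([s, 0] ++ a.take i ++ a.drop (i + 2)) ∧
    ((raiseList (rkL a) a i).length : ℤ) =
      (a.getD (i + 1) 0 : ℤ) + (i : ℤ) * (s : ℤ) - 2 * ((a.take i).sum : ℤ) + 1 :=
  raising_from_leftmost_general n hn a hlen s hs i hi
end

section
/- (Unimodality and symmetry of the Gaussian binomial coefficients.) Let m, n ≥ 0 and for 0 ≤ N ≤ mn let c_N denote the number of partitions λ = (λ_1 ≥ λ_2 ≥ ⋯ ≥ λ_m ≥ 0) with at most m parts, each part of size at most n, and with λ_1 + ⋯ + λ_m = N. Then c_N = c_{mn−N} for all 0 ≤ N ≤ mn, and c_{N−1} ≤ c_N for all 1 ≤ N ≤ ⌊mn/2⌋; that is, the coefficient sequence of the Gaussian binomial coefficient [(m+n) choose m]_q = Π_{i=1}^m (1−q^{n+i})/(1−q^i) is symmetric and unimodal. -/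
/-!
Proctor's proof. On real functions on the partitions in the `m × n` box, let `E` add one cell
in row `i` (rows numbered `0, …, m - 1`) with weight `√((λᵢ + m - i)(n - λᵢ + i))`. These
weights make `E` and its transpose an `sl₂`-pair: `Eᵀ E - E Eᵀ` is diagonal with entry
`mn - 2|λ|` at `λ`. Hence for `x` supported in size `M` with `2M < mn` we get
`‖E x‖² ≥ (mn - 2M) ‖x‖²`, so `E` maps the functions on size `M` injectively to those on size
`M + 1`, which gives unimodality. Symmetry comes from taking the complement of a partition in
the box.
-/

open Finset Matrix

theorem Fintype.sum_sum_ite_mul_sum_ite {κ ι R : Type*} [Fintype κ] [Fintype ι]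
    [NonUnitalNonAssocSemiring R] (P Q : ι → κ → Prop) [∀ i q, Decidable (P i q)]
    [∀ j q, Decidable (Q j q)] (hP : ∀ i q q', P i q → P i q' → q = q') (a b : ι → R) :
    ∑ q, (∑ i, if P i q then a i else 0) * (∑ j, if Q j q then b j else 0) =
      ∑ i, ∑ j, if ∃ q, P i q ∧ Q j q then a i * b j else 0 := by
  simp only [sum_mul_sum, ite_zero_mul_ite_zero]
  rw [sum_comm]
  refine Finset.sum_congr rfl fun i _ => ?_
  rw [sum_comm]
  exact Finset.sum_congr rfl fun j _ =>
    Fintype.sum_ite_eq_ite_exists (fun q => P i q ∧ Q j q) (fun q q' h h' => hP i q q' h.1 h'.1) _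

theorem Fin.sum_two_mul_add_one {R : Type*} [CommSemiring R] (m : ℕ) :
    ∑ i : Fin m, (2 * (i : R) + 1) = m ^ 2 := by
  induction m with
  | zero => simp
  | succ k ih =>
    simp only [Fin.sum_univ_castSucc, Fin.val_castSucc, Fin.val_last, ih]
    push_cast
    ring

theorem Matrix.mulVec_dotProduct_mulVec_self_eq {ι R : Type*} [Fintype ι] [DecidableEq ι]
    [CommSemiring R] {E : Matrix ι ι R} {d : ι → R} (hcomm : Eᵀ * E = E * Eᵀ + diagonal d)
    (x : ι → R) :
    (E *ᵥ x) ⬝ᵥ (E *ᵥ x) = (Eᵀ *ᵥ x) ⬝ᵥ (Eᵀ *ᵥ x) + ∑ p, d p * (x p * x p) := by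
  calc (E *ᵥ x) ⬝ᵥ (E *ᵥ x) = x ⬝ᵥ ((Eᵀ * E) *ᵥ x) := by
        rw [← mulVec_mulVec, dotProduct_mulVec x Eᵀ, vecMul_transpose]
    _ = (Eᵀ *ᵥ x) ⬝ᵥ (Eᵀ *ᵥ x) + ∑ p, d p * (x p * x p) := by
        rw [hcomm, add_mulVec, dotProduct_add, ← mulVec_mulVec, dotProduct_mulVec,
          ← mulVec_transpose]
        simp only [dotProduct, mulVec_diagonal]
        congr 1
        exact Finset.sum_congr rfl fun p _ => by ring

theorem Matrix.eq_zero_of_mulVec_eq_zero_of_transpose_mul_self_eq {ι : Type*} [Fintype ι]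
    [DecidableEq ι] {E : Matrix ι ι ℝ} {d : ι → ℝ} (hcomm : Eᵀ * E = E * Eᵀ + diagonal d)
    {x : ι → ℝ} (hd : ∀ p, x p ≠ 0 → 0 < d p) (hEx : E *ᵥ x = 0) : x = 0 := by
  have hterm : ∀ p, 0 ≤ d p * (x p * x p) := fun p => by
    by_cases hp : x p = 0
    · rw [hp, mul_zero, mul_zero]
    · exact mul_nonneg (hd p hp).le (mul_self_nonneg _)
  have hsum : ∑ p, d p * (x p * x p) = 0 := by
    have h := mulVec_dotProduct_mulVec_self_eq hcomm x
    rw [hEx, dotProduct_zero] at h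
    have : 0 ≤ (Eᵀ *ᵥ x) ⬝ᵥ (Eᵀ *ᵥ x) := Finset.sum_nonneg fun _ _ => mul_self_nonneg _
    linarith [Finset.sum_nonneg fun p (_ : p ∈ univ) => hterm p]
  funext p
  by_contra hp
  have hxp := congrFun ((Fintype.sum_eq_zero_iff_of_nonneg hterm).1 hsum) p
  rw [Pi.zero_apply, mul_eq_zero, or_iff_right (hd p hp).ne', mul_self_eq_zero] at hxp
  exact hp hxp

theorem Matrix.card_le_card_succ_of_transpose_mul_self_eq {ι : Type*} [Fintype ι] [DecidableEq ι]
    (deg : ι → ℕ) (E : Matrix ι ι ℝ) (d : ι → ℝ) (hE : ∀ q p, E q p ≠ 0 → deg q = deg p + 1)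
    (hcomm : Eᵀ * E = E * Eᵀ + diagonal d) {M : ℕ} (hd : ∀ p, deg p = M → 0 < d p) :
    Fintype.card {p // deg p = M} ≤ Fintype.card {q // deg q = M + 1} := by
  let A : Matrix {q // deg q = M + 1} {p // deg p = M} ℝ := E.submatrix Subtype.val Subtype.val
  suffices hA : Function.Injective A.mulVecLin by
    simpa only [Module.finrank_fintype_fun_eq_card] using
      LinearMap.finrank_le_finrank_of_injective hA
  rw [← LinearMap.ker_eq_bot, LinearMap.ker_eq_bot']
  intro y hy
  let x : ι → ℝ := fun p => if h : deg p = M then y ⟨p, h⟩ else 0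
  have hx : ∀ p, deg p ≠ M → x p = 0 := fun p hp => dif_neg hp
  have hEx : E *ᵥ x = 0 := by
    funext q
    have hsum : (E *ᵥ x) q = ∑ p : {p // deg p = M}, E q p * y p := by
      rw [mulVec, dotProduct, ← Fintype.sum_subtype_add_sum_subtype (fun p => deg p = M),
        Fintype.sum_eq_zero (fun p : {p // ¬deg p = M} => _) fun p => by rw [hx p p.2, mul_zero],
        add_zero]
      exact Finset.sum_congr rfl fun p _ => by rw [show x p = y p from dif_pos p.2]
    rw [hsum, Pi.zero_apply]
    by_cases hq : deg q = M + 1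
    · exact congrFun hy ⟨q, hq⟩
    · refine Fintype.sum_eq_zero _ fun p => ?_
      rw [not_imp_comm.1 (hE q p) (by rw [p.2]; exact hq), zero_mul]
  have hx0 := eq_zero_of_mulVec_eq_zero_of_transpose_mul_self_eq hcomm
    (fun p hp => hd p (not_imp_comm.1 (hx p) hp)) hEx
  funext p
  simpa [x, p.2] using congrFun hx0 p.1

namespace GaussianBinomial

def boxPartitions (m n : ℕ) : Set (Fin m → ℕ) := {f | Antitone f ∧ ∀ i, f i ≤ n}

namespace boxPartitions

variable {m n : ℕ}

instance : Finite (boxPartitions m n) :=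
  Finite.of_injective (fun p i => (⟨p.1 i, Nat.lt_succ_of_le (p.2.2 i)⟩ : Fin (n + 1)))
    fun _ _ h => Subtype.ext <| funext fun i => congrArg Fin.val (congrFun h i)

noncomputable instance : Fintype (boxPartitions m n) := Fintype.ofFinite _

theorem sup_mem {f g : Fin m → ℕ} (hf : f ∈ boxPartitions m n) (hg : g ∈ boxPartitions m n) :
    f ⊔ g ∈ boxPartitions m n :=
  ⟨hf.1.sup hg.1, fun i => sup_le (hf.2 i) (hg.2 i)⟩

theorem inf_mem {f g : Fin m → ℕ} (hf : f ∈ boxPartitions m n) (hg : g ∈ boxPartitions m n) :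
    f ⊓ g ∈ boxPartitions m n :=
  ⟨hf.1.inf hg.1, fun i => inf_le_left.trans (hf.2 i)⟩

theorem exists_val_eq_add_single_iff {p : Fin m → ℕ} (hp : p ∈ boxPartitions m n) (i : Fin m) :
    (∃ q : boxPartitions m n, q.1 = p + Pi.single i 1) ↔ p i < n ∧ ∀ j < i, p i < p j := by
  constructor
  · rintro ⟨⟨q, hanti, hle⟩, rfl⟩
    refine ⟨by simpa using hle i, fun j hj => ?_⟩
    simpa [hj.ne] using hanti hj.le
  · rintro ⟨hi, hlt⟩
    refine ⟨⟨p + Pi.single i 1, fun a b hab => ?_, fun k => ?_⟩, rfl⟩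
    · have := hp.1 hab
      have := hlt a
      simp only [Pi.add_apply, Pi.single_apply]
      split_ifs <;> subst_vars <;> omega
    · have := hp.2 k
      simp only [Pi.add_apply, Pi.single_apply]
      split_ifs <;> subst_vars <;> omega

theorem exists_eq_val_add_single_iff {p : Fin m → ℕ} (hp : p ∈ boxPartitions m n) (i : Fin m) :
    (∃ r : boxPartitions m n, p = r.1 + Pi.single i 1) ↔
      0 < p i ∧ ∀ j, i < j → p j < p i := by
  constructor
  · rintro ⟨⟨r, hanti, -⟩, rfl⟩
    refine ⟨by simp, fun j hj => ?_⟩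
    simpa [hj.ne'] using Nat.lt_succ_of_le (hanti hj.le)
  · rintro ⟨hi, hlt⟩
    refine ⟨⟨p - Pi.single i 1, fun a b hab => ?_, fun k => (Nat.sub_le _ _).trans (hp.2 k)⟩, ?_⟩
    · have := hp.1 hab
      have := hlt b
      simp only [Pi.sub_apply, Pi.single_apply]
      split_ifs <;> subst_vars <;> omega
    · funext k
      simp only [Pi.add_apply, Pi.sub_apply, Pi.single_apply]
      split_ifs <;> subst_vars <;> omega

theorem add_single_eq_sup {p p' : Fin m → ℕ} {i j : Fin m} (hij : i ≠ j)
    (h : p + Pi.single i 1 = p' + Pi.single j 1) : p + Pi.single i 1 = p ⊔ p' := by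
  funext k
  have := congrFun h k
  simp only [Pi.add_apply, Pi.single_apply, Pi.sup_apply] at this ⊢
  split_ifs at this ⊢ <;> subst_vars <;> omega

theorem eq_inf_add_single {p p' : Fin m → ℕ} {i j : Fin m} (hij : i ≠ j)
    (h : p + Pi.single i 1 = p' + Pi.single j 1) : p = p ⊓ p' + Pi.single j 1 := by
  funext k
  have := congrFun h k
  simp only [Pi.add_apply, Pi.single_apply, Pi.inf_apply] at this ⊢
  split_ifs at this ⊢ <;> subst_vars <;> omega

theorem exists_sup_iff_exists_inf {p p' : boxPartitions m n} {i j : Fin m} (hij : i ≠ j) :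
    (∃ q : boxPartitions m n, q.1 = p.1 + Pi.single i 1 ∧ q.1 = p'.1 + Pi.single j 1) ↔
      ∃ r : boxPartitions m n, p.1 = r.1 + Pi.single j 1 ∧ p'.1 = r.1 + Pi.single i 1 := by
  constructor
  · rintro ⟨q, hq, hq'⟩
    have h := hq.symm.trans hq'
    refine ⟨⟨p.1 ⊓ p'.1, inf_mem p.2 p'.2⟩, eq_inf_add_single hij h, ?_⟩
    show p'.1 = p.1 ⊓ p'.1 + _
    rw [inf_comm]
    exact eq_inf_add_single hij.symm h.symm
  · rintro ⟨r, hr, hr'⟩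
    have h : p.1 + Pi.single i 1 = p'.1 + Pi.single j 1 := by rw [hr, hr', add_right_comm]
    exact ⟨⟨p.1 ⊔ p'.1, sup_mem p.2 p'.2⟩, (add_single_eq_sup hij h).symm,
      h ▸ (add_single_eq_sup hij h).symm⟩

theorem exists_val_eq_add_single_same_iff {p p' : boxPartitions m n} {i : Fin m} :
    (∃ q : boxPartitions m n, q.1 = p.1 + Pi.single i 1 ∧ q.1 = p'.1 + Pi.single i 1) ↔
      p = p' ∧ ∃ q : boxPartitions m n, q.1 = p.1 + Pi.single i 1 := by
  constructor
  · rintro ⟨q, hq, hq'⟩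
    exact ⟨Subtype.ext (add_right_cancel (hq.symm.trans hq')), q, hq⟩
  · rintro ⟨rfl, q, hq⟩
    exact ⟨q, hq, hq⟩

theorem exists_eq_val_add_single_same_iff {p p' : boxPartitions m n} {i : Fin m} :
    (∃ r : boxPartitions m n, p.1 = r.1 + Pi.single i 1 ∧ p'.1 = r.1 + Pi.single i 1) ↔
      p = p' ∧ ∃ r : boxPartitions m n, p.1 = r.1 + Pi.single i 1 := by
  constructor
  · rintro ⟨r, hr, hr'⟩
    exact ⟨Subtype.ext (hr.trans hr'.symm), r, hr⟩
  · rintro ⟨rfl, r, hr⟩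
    exact ⟨r, hr, hr⟩

end boxPartitions

/-- `weightSq m n i x` vanishes for `(i, x) = (0, n)` and for `(i, x) = (m - 1, -1)`: a full first
row and an empty last row, the two cases where a blocked move has no partner to cancel against. -/
def weightSq (m n i : ℕ) (x : ℝ) : ℝ := (x + m - i) * (n - x + i)

noncomputable def weight (m n i k : ℕ) : ℝ := √(weightSq m n i k)

namespace weightSq

variable {m n : ℕ}

theorem succ_left (i : ℕ) (x : ℝ) : weightSq m n (i + 1) x = weightSq m n i (x - 1) := by
  unfold weightSq
  push_cast
  ring

theorem sub_pred (i : ℕ) (x : ℝ) :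
    weightSq m n i x - weightSq m n i (x - 1) = n - m + (2 * i + 1) - 2 * x := by
  unfold weightSq
  ring

theorem nonneg {i k : ℕ} (hi : i ≤ m) (hk : k ≤ n) : 0 ≤ weightSq m n i k := by
  have : (i : ℝ) ≤ m := by exact_mod_cast hi
  have : (k : ℝ) ≤ n := by exact_mod_cast hk
  unfold weightSq
  apply mul_nonneg <;> linarith [Nat.cast_nonneg (α := ℝ) k, Nat.cast_nonneg (α := ℝ) i]

end weightSq

theorem weight_sq {m n i k : ℕ} (hi : i ≤ m) (hk : k ≤ n) :
    weight m n i k ^ 2 = weightSq m n i k :=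
  Real.sq_sqrt (weightSq.nonneg hi hk)

namespace boxPartitions

variable {m n : ℕ} {p : Fin m → ℕ}

theorem ite_addable_eq (hp : p ∈ boxPartitions m n) (i : Fin m) :
    (if p i < n ∧ ∀ j < i, p i < p j then weightSq m n i (p i) else 0) =
      weightSq m n i (p i) -
        ∑ j : Fin m, if j.val + 1 = i.val ∧ p j = p i then weightSq m n i (p i) else 0 := by
  rw [Fintype.sum_ite_eq_ite_exists _ fun j j' h h' => Fin.ext (by omega)]
  split_ifs with hadd hprev hprev
  · obtain ⟨j, hj, hji⟩ := hprev
    exact absurd (hadd.2 j (by omega)) (by omega)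
  · rw [sub_zero]
  · rw [sub_self]
  · rcases i with ⟨_ | k, hk⟩
    · have : p ⟨0, hk⟩ = n := le_antisymm (hp.2 _) <| not_lt.1 fun hlt =>
        hadd ⟨hlt, fun j hj => absurd hj (Nat.not_lt_zero _)⟩
      simp [this, weightSq]
    · have hlt : p ⟨k + 1, hk⟩ < p ⟨k, by omega⟩ :=
        lt_of_le_of_ne (hp.1 (Fin.mk_le_mk.2 k.le_succ)) fun h => hprev ⟨_, rfl, h.symm⟩
      refine absurd ⟨hlt.trans_le (hp.2 _), fun j hj => hlt.trans_le (hp.1 ?_)⟩ hadd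
      simp only [Fin.lt_def, Fin.le_def] at hj ⊢
      omega

theorem ite_removable_eq (hp : p ∈ boxPartitions m n) (i : Fin m) :
    (if 0 < p i ∧ ∀ j, i < j → p j < p i then weightSq m n i ((p i : ℝ) - 1) else 0) =
      weightSq m n i ((p i : ℝ) - 1) - ∑ j : Fin m,
        if i.val + 1 = j.val ∧ p j = p i then weightSq m n i ((p i : ℝ) - 1) else 0 := by
  rw [Fintype.sum_ite_eq_ite_exists _ fun j j' h h' => Fin.ext (by omega)]
  split_ifs with hrem hnext hnext
  · obtain ⟨j, hj, hji⟩ := hnext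
    exact absurd (hrem.2 j (by rw [Fin.lt_def]; omega)) (by omega)
  · rw [sub_zero]
  · rw [sub_self]
  · by_cases hlast : i.val + 1 < m
    · have hlt : p ⟨i.val + 1, hlast⟩ < p i :=
        lt_of_le_of_ne (hp.1 (Fin.mk_le_mk.2 i.val.le_succ)) fun h => hnext ⟨_, rfl, h⟩
      refine absurd ⟨by omega, fun j hj => (hp.1 ?_).trans_lt hlt⟩ hrem
      simp only [Fin.lt_def, Fin.le_def] at hj ⊢
      omega
    · have hi : (i.val : ℝ) + 1 = m := by exact_mod_cast (show i.val + 1 = m by omega)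
      have : p i = 0 := Nat.eq_zero_of_not_pos fun hpos =>
        hrem ⟨hpos, fun j hj => absurd hj (by rw [Fin.lt_def]; omega)⟩
      simp only [this, weightSq, Nat.cast_zero, zero_sub]
      rw [← hi]
      ring

/-- Blocked moves cancel in pairs: equal rows `i` and `i + 1` block both adding to row `i + 1` and
removing from row `i`, and the two weights agree by `weightSq.succ_left`. -/
theorem sum_ite_addable_sub_ite_removable (hp : p ∈ boxPartitions m n) :
    ∑ i : Fin m, ((if p i < n ∧ ∀ j < i, p i < p j then weightSq m n i (p i) else 0) -
      (if 0 < p i ∧ ∀ j, i < j → p j < p i then weightSq m n i ((p i : ℝ) - 1) else 0)) =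
      m * n - 2 * ∑ i, (p i : ℝ) := by
  have hblocked : (∑ i : Fin m, ∑ j : Fin m,
      if j.val + 1 = i.val ∧ p j = p i then weightSq m n i (p i) else 0) =
      ∑ i : Fin m, ∑ j : Fin m,
        if i.val + 1 = j.val ∧ p j = p i then weightSq m n i ((p i : ℝ) - 1) else 0 := by
    rw [sum_comm (s := univ) (t := univ) (f := fun i j =>
      if i.val + 1 = j.val ∧ p j = p i then weightSq m n i ((p i : ℝ) - 1) else 0)]
    refine Finset.sum_congr rfl fun i _ => Finset.sum_congr rfl fun j _ => ?_
    by_cases h : j.val + 1 = i.val ∧ p j = p i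
    · rw [if_pos h, if_pos ⟨h.1, h.2.symm⟩, ← h.1, weightSq.succ_left, h.2]
    · rw [if_neg h, if_neg fun h' => h ⟨h'.1, h'.2.symm⟩]
  calc _ = ∑ i : Fin m, ((weightSq m n i (p i) -
          ∑ j : Fin m, if j.val + 1 = i.val ∧ p j = p i then weightSq m n i (p i) else 0) -
        (weightSq m n i ((p i : ℝ) - 1) - ∑ j : Fin m,
          if i.val + 1 = j.val ∧ p j = p i then weightSq m n i ((p i : ℝ) - 1) else 0)) := by
        simp only [ite_addable_eq hp, ite_removable_eq hp]
    _ = ∑ i : Fin m, (weightSq m n i (p i) - weightSq m n i ((p i : ℝ) - 1)) := by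
        simp only [sum_sub_distrib, hblocked]
        ring
    _ = ∑ i : Fin m, ((n - m : ℝ) + (2 * (i : ℝ) + 1) - 2 * p i) := by
        simp only [weightSq.sub_pred]
    _ = m * n - 2 * ∑ i, (p i : ℝ) := by
        rw [sum_sub_distrib, sum_add_distrib, Fin.sum_two_mul_add_one, ← mul_sum, sum_const,
          card_univ, Fintype.card_fin, nsmul_eq_mul]
        ring

end boxPartitions

noncomputable def raising (m n : ℕ) : Matrix (boxPartitions m n) (boxPartitions m n) ℝ :=
  fun q p => ∑ i : Fin m, if q.1 = p.1 + Pi.single i 1 then weight m n i (p.1 i) else 0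

namespace raising

variable {m n : ℕ}

theorem apply_eq_sum_weight_pred (q p : boxPartitions m n) :
    raising m n q p =
      ∑ i : Fin m, if q.1 = p.1 + Pi.single i 1 then weight m n i (q.1 i - 1) else 0 :=
  Finset.sum_congr rfl fun i _ => by split_ifs with h <;> simp [h]

theorem sum_eq_of_ne_zero {q p : boxPartitions m n} (h : raising m n q p ≠ 0) :
    ∑ k, q.1 k = ∑ k, p.1 k + 1 := by
  obtain ⟨i, -, hi⟩ := exists_ne_zero_of_sum_ne_zero h
  have hq : q.1 = p.1 + Pi.single i 1 := by_contra fun hq => hi (if_neg hq)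
  simp [hq, sum_add_distrib]

theorem transpose_mul_self_apply (p p' : boxPartitions m n) :
    ((raising m n)ᵀ * raising m n) p p' = ∑ i : Fin m, ∑ j : Fin m,
      if ∃ q : boxPartitions m n, q.1 = p.1 + Pi.single i 1 ∧ q.1 = p'.1 + Pi.single j 1 then
        weight m n i (p.1 i) * weight m n j (p'.1 j) else 0 := by
  simp only [mul_apply, transpose_apply]
  exact Fintype.sum_sum_ite_mul_sum_ite
    (fun (i : Fin m) (q : boxPartitions m n) => q.1 = p.1 + Pi.single i 1)
    (fun (j : Fin m) (q : boxPartitions m n) => q.1 = p'.1 + Pi.single j 1)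
    (fun _ _ _ h h' => Subtype.ext (h.trans h'.symm))
    (fun i : Fin m => weight m n i (p.1 i)) (fun j : Fin m => weight m n j (p'.1 j))

theorem mul_transpose_self_apply (p p' : boxPartitions m n) :
    (raising m n * (raising m n)ᵀ) p p' = ∑ i : Fin m, ∑ j : Fin m,
      if ∃ r : boxPartitions m n, p.1 = r.1 + Pi.single i 1 ∧ p'.1 = r.1 + Pi.single j 1 then
        weight m n i (p.1 i - 1) * weight m n j (p'.1 j - 1) else 0 := by
  simp only [mul_apply, transpose_apply, apply_eq_sum_weight_pred]
  exact Fintype.sum_sum_ite_mul_sum_ite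
    (fun (i : Fin m) (r : boxPartitions m n) => p.1 = r.1 + Pi.single i 1)
    (fun (j : Fin m) (r : boxPartitions m n) => p'.1 = r.1 + Pi.single j 1)
    (fun _ _ _ h h' => Subtype.ext (add_right_cancel (h.symm.trans h')))
    (fun i : Fin m => weight m n i (p.1 i - 1)) (fun j : Fin m => weight m n j (p'.1 j - 1))

/-- For `i ≠ j`, the path `p ↗ p ⊔ p' ↘ p'` adding to row `i` and removing from row `j` is matched
by the path `p ↘ p ⊓ p' ↗ p'` removing from row `j` and adding to row `i`, with the same weight;
only the terms with `i = j` survive. -/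
theorem transpose_mul_self_sub_mul_transpose_self_apply (p p' : boxPartitions m n) :
    ((raising m n)ᵀ * raising m n) p p' - (raising m n * (raising m n)ᵀ) p p' =
      if p = p' then ∑ i : Fin m,
        ((if ∃ q : boxPartitions m n, q.1 = p.1 + Pi.single i 1 then
            weight m n i (p.1 i) ^ 2 else 0) -
          (if ∃ r : boxPartitions m n, p.1 = r.1 + Pi.single i 1 then
            weight m n i (p.1 i - 1) ^ 2 else 0))
      else 0 := by
  have hcross : ∀ i j : Fin m, i ≠ j →
      (if ∃ q : boxPartitions m n, q.1 = p.1 + Pi.single i 1 ∧ q.1 = p'.1 + Pi.single j 1 then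
        weight m n i (p.1 i) * weight m n j (p'.1 j) else 0) =
      (if ∃ r : boxPartitions m n, p.1 = r.1 + Pi.single j 1 ∧ p'.1 = r.1 + Pi.single i 1 then
        weight m n j (p.1 j - 1) * weight m n i (p'.1 i - 1) else 0) := by
    intro i j hij
    by_cases h : ∃ r : boxPartitions m n, p.1 = r.1 + Pi.single j 1 ∧ p'.1 = r.1 + Pi.single i 1
    · rw [if_pos ((boxPartitions.exists_sup_iff_exists_inf hij).2 h), if_pos h]
      obtain ⟨r, hr, hr'⟩ := h
      have hpi := congrFun hr i
      have hpj := congrFun hr j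
      have hp'i := congrFun hr' i
      have hp'j := congrFun hr' j
      simp only [Pi.add_apply, Pi.single_eq_same, Pi.single_eq_of_ne hij,
        Pi.single_eq_of_ne hij.symm] at hpi hpj hp'i hp'j
      rw [show p'.1 i - 1 = p.1 i by omega, show p.1 j - 1 = p'.1 j by omega, mul_comm]
    · rw [if_neg (mt (boxPartitions.exists_sup_iff_exists_inf hij).1 h), if_neg h]
  rw [transpose_mul_self_apply, mul_transpose_self_apply, sum_comm (f := fun i j => ite _ _ _),
    ← sum_sub_distrib]
  refine (Finset.sum_congr rfl fun i _ => by
    rw [← sum_sub_distrib,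
      Fintype.sum_eq_single i fun j hj => sub_eq_zero.2 (hcross j i hj)]).trans ?_
  split_ifs with hpp
  · subst hpp
    simp only [boxPartitions.exists_val_eq_add_single_same_iff,
      boxPartitions.exists_eq_val_add_single_same_iff, true_and, sq]
  · simp only [boxPartitions.exists_val_eq_add_single_same_iff,
      boxPartitions.exists_eq_val_add_single_same_iff, hpp, false_and, if_false, sub_self,
      sum_const_zero]

theorem transpose_mul_self (m n : ℕ) :
    (raising m n)ᵀ * raising m n =
      raising m n * (raising m n)ᵀ + diagonal fun p => (m * n : ℝ) - 2 * ∑ k, (p.1 k : ℝ) := by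
  ext p p'
  rw [Matrix.add_apply, diagonal_apply, ← sub_eq_iff_eq_add',
    transpose_mul_self_sub_mul_transpose_self_apply]
  split_ifs with hpp
  · subst hpp
    rw [← boxPartitions.sum_ite_addable_sub_ite_removable p.2]
    refine Finset.sum_congr rfl fun i _ => ?_
    congr 1
    · by_cases h : ∃ q : boxPartitions m n, q.1 = p.1 + Pi.single i 1
      · rw [if_pos h, if_pos ((boxPartitions.exists_val_eq_add_single_iff p.2 i).1 h),
          weight_sq i.is_lt.le (p.2.2 i)]
      · rw [if_neg h, if_neg (mt (boxPartitions.exists_val_eq_add_single_iff p.2 i).2 h)]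
    · by_cases h : ∃ r : boxPartitions m n, p.1 = r.1 + Pi.single i 1
      · have h' := (boxPartitions.exists_eq_val_add_single_iff p.2 i).1 h
        rw [if_pos h, if_pos h', weight_sq i.is_lt.le ((Nat.sub_le _ _).trans (p.2.2 i)),
          Nat.cast_pred h'.1]
      · rw [if_neg h, if_neg (mt (boxPartitions.exists_eq_val_add_single_iff p.2 i).2 h)]
  · rfl

end raising

namespace boxPartitions

variable {m n : ℕ}

theorem card_le_card_succ {M : ℕ} (hM : 2 * M < m * n) :
    Fintype.card {p : boxPartitions m n // ∑ k, p.1 k = M} ≤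
      Fintype.card {p : boxPartitions m n // ∑ k, p.1 k = M + 1} := by
  refine card_le_card_succ_of_transpose_mul_self_eq _ (raising m n) _
    (fun _ _ h => raising.sum_eq_of_ne_zero h) (raising.transpose_mul_self m n) fun p hp => ?_
  have : (2 * M : ℝ) < m * n := by exact_mod_cast hM
  rw [← Nat.cast_sum, hp]
  linarith

def compl (p : boxPartitions m n) : boxPartitions m n :=
  ⟨fun i => n - p.1 i.rev, fun _ _ hab => Nat.sub_le_sub_left (p.2.1 (Fin.rev_le_rev.2 hab)) n,
    fun _ => Nat.sub_le _ _⟩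

theorem compl_involutive : Function.Involutive (compl : boxPartitions m n → boxPartitions m n) :=
  fun p => Subtype.ext <| funext fun i => by simp [compl, Nat.sub_sub_self (p.2.2 i)]

theorem sum_compl (p : boxPartitions m n) : ∑ k, (compl p).1 k = m * n - ∑ k, p.1 k := by
  have h : ∑ k, (n - p.1 k) + ∑ k, p.1 k = m * n := by
    rw [← sum_add_distrib, sum_congr rfl fun k _ => Nat.sub_add_cancel (p.2.2 k)]
    simp
  have hrev : ∑ k, (compl p).1 k = ∑ k, (n - p.1 k) :=
    Fintype.sum_equiv Fin.revPerm _ _ fun _ => rfl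
  omega

theorem card_eq_card_mul_sub {N : ℕ} (hN : N ≤ m * n) :
    Fintype.card {p : boxPartitions m n // ∑ k, p.1 k = N} =
      Fintype.card {p : boxPartitions m n // ∑ k, p.1 k = m * n - N} :=
  Fintype.card_congr <| (compl_involutive.toPerm compl).subtypeEquiv fun p => by
    have := sum_compl p
    have := sum_compl (compl p)
    rw [compl_involutive p] at this
    simp only [Function.Involutive.coe_toPerm]
    omega

end boxPartitions

end GaussianBinomial

/-- Symmetry and unimodality of the Gaussian binomial coefficient `[(m+n) choose m]_q`:
writing `c N` for the number of partitions with at most `m` parts, each of size at most `n`,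
and of total size `N`, one has `c N = c (mn - N)` for `0 ≤ N ≤ mn` and `c (N-1) ≤ c N` for
`1 ≤ N ≤ ⌊mn/2⌋`. -/
theorem gaussian_binomial_symmetric_unimodal (m n : ℕ)
    (c : ℕ → ℕ)
    (hc : ∀ N, c N = Nat.card {lam : Fin m → ℕ //
        (∀ i j : Fin m, i ≤ j → lam j ≤ lam i) ∧ (∀ i, lam i ≤ n) ∧ ∑ i, lam i = N}) :
    (∀ N ≤ m * n, c N = c (m * n - N)) ∧
    (∀ N, 1 ≤ N → N ≤ m * n / 2 → c (N - 1) ≤ c N) := by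
  have hcard : ∀ N, c N =
      Fintype.card {p : GaussianBinomial.boxPartitions m n // ∑ k, p.1 k = N} := fun N => by
    rw [hc, ← Nat.card_eq_fintype_card]
    exact Nat.card_congr ((Equiv.subtypeSubtypeEquivSubtypeInter
      (· ∈ GaussianBinomial.boxPartitions m n) _).trans
        (Equiv.subtypeEquivRight fun _ => and_assoc)).symm
  simp only [hcard]
  refine ⟨fun N hN => GaussianBinomial.boxPartitions.card_eq_card_mul_sub hN, fun N hN₁ hN => ?_⟩
  obtain ⟨M, rfl⟩ : ∃ M, N = M + 1 := ⟨N - 1, by omega⟩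
  exact GaussianBinomial.boxPartitions.card_le_card_succ (by omega)
end
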